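/- arXiv:2404.09962 — 3 statements merged into one kernel-verified Lean document; each statement's English description precedes it below -/
import Mathlib

section
/- Let {𝒮_j}_{j=1}^q be an orthogonal (Σ_t)_{t∈T}-decorrelating partition, let 𝒮^inv be the direct sum of those 𝒮_j that are opt-invariant on T, and let β^inv be the unique maximizer over 𝒮^inv of the averaged explained variance β ↦ (1/n)∑_{t∈T} ΔVar_t(β). Then for every t ∈ T one has β^inv = Π_{𝒮^inv} γ_t; in particular β^inv = Π_{𝒮^inv} γ̄ where γ̄ := (1/n)∑_{t∈T} γ_t. -/
open Matrix Finset MeasureTheory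

noncomputable section

/-- Vectors in `ℝ^p`. -/
abbrev Vec (p : ℕ) : Type := Fin p → ℝ

/-- Real `p × p` matrices. -/
abbrev Mat (p : ℕ) : Type := Matrix (Fin p) (Fin p) ℝ

/-- Explained variance `ΔVar(β) = 2 γᵀ C β − βᵀ C β` at a time with covariance `C`
and true parameter `γ`. -/
def dVar {p : ℕ} (C : Mat p) (γ β : Vec p) : ℝ :=
  2 * (γ ⬝ᵥ (C *ᵥ β)) - β ⬝ᵥ (C *ᵥ β)

/-- `β₀` is the unique maximizer of `f` over the linear subspace whose orthogonal
projection matrix is `P` (membership in the subspace is expressed as `P *ᵥ β = β`). -/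
def IsUMaxOn {p : ℕ} (f : Vec p → ℝ) (P : Mat p) (β₀ : Vec p) : Prop :=
  P *ᵥ β₀ = β₀ ∧ ∀ β : Vec p, P *ᵥ β = β → β ≠ β₀ → f β < f β₀

/-- The matrices `P j` are the orthogonal projection matrices of a family of pairwise
orthogonal nonzero linear subspaces of `ℝ^p` whose direct sum is `ℝ^p`. -/
structure OrthPartition (p q : ℕ) (P : Fin q → Mat p) : Prop where
  symm : ∀ j, (P j)ᵀ = P j
  idem : ∀ j, P j * P j = P j
  nonzero : ∀ j, P j ≠ 0
  orth : ∀ i j, i ≠ j → P i * P j = 0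
  sum_one : ∑ j, P j = 1

/-- The subspace with orthogonal projection `Q` is opt-invariant on `{1,…,n}`:
the unique maximizer of `ΔVar_t` over it is the same for all `t`. -/
def OptInv {p n : ℕ} (Cov : Fin n → Mat p) (γ : Fin n → Vec p) (Q : Mat p) : Prop :=
  ∃ β₀ : Vec p, ∀ t : Fin n, IsUMaxOn (dVar (Cov t) (γ t)) Q β₀

open scoped Classical in
/-- Orthogonal projection onto `𝒮^inv`, the direct sum of the opt-invariant subspaces
of the partition. -/
noncomputable def invProj {p n q : ℕ} (Cov : Fin n → Mat p) (γ : Fin n → Vec p)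
    (P : Fin q → Mat p) : Mat p :=
  ∑ j ∈ Finset.univ.filter (fun j => OptInv Cov γ (P j)), P j

open scoped Classical in
/-- Orthogonal projection onto `𝒮^res`, the direct sum of the non-opt-invariant
subspaces of the partition. -/
noncomputable def resProj {p n q : ℕ} (Cov : Fin n → Mat p) (γ : Fin n → Vec p)
    (P : Fin q → Mat p) : Mat p :=
  ∑ j ∈ Finset.univ.filter (fun j => ¬ OptInv Cov γ (P j)), P j

/-!
Decorrelation makes every block projection `Π_{𝒮_j}` commute with every `Σ_t`, hence so does
the projection `Π_𝒮` onto any sum `𝒮` of blocks, and then for `β ∈ 𝒮`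
`ΔVar_t(Π_𝒮 γ_t) - ΔVar_t(β) = (β - Π_𝒮 γ_t)ᵀ Σ_t (β - Π_𝒮 γ_t) > 0` unless `β = Π_𝒮 γ_t`.
So the maximizer over an opt-invariant block `𝒮_j` is `Π_{𝒮_j} γ_t`, which is therefore
independent of `t`; summing over these blocks, `Π_{𝒮^inv} γ_t` does not depend on `t` either.
As the common maximizer of all the `ΔVar_t` over `𝒮^inv`, it maximizes their average, so it
is `β^inv`.
-/

theorem IsUMaxOn.unique {p : ℕ} {f : Vec p → ℝ} {Q : Mat p} {a b : Vec p}
    (ha : IsUMaxOn f Q a) (hb : IsUMaxOn f Q b) : a = b := by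
  by_contra h
  linarith [ha.2 b hb.1 (Ne.symm h), hb.2 a ha.1 h]

theorem IsUMaxOn.const_mul_sum {p : ℕ} {ι : Type*} [Fintype ι] [Nonempty ι] {f : ι → Vec p → ℝ}
    {Q : Mat p} {b : Vec p} {c : ℝ} (hc : 0 < c) (h : ∀ i, IsUMaxOn (f i) Q b) :
    IsUMaxOn (fun β => c * ∑ i, f i β) Q b := by
  obtain ⟨i₀⟩ := ‹Nonempty ι›
  refine ⟨(h i₀).1, fun β hβ hne => mul_lt_mul_of_pos_left ?_ hc⟩
  exact Finset.sum_lt_sum_of_nonempty univ_nonempty fun i _ => (h i).2 β hβ hne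

theorem commute_of_sum_eq_one_of_mul_mul_eq_zero {R ι : Type*} [Semiring R] [Fintype ι]
    {e : ι → R} {c : R} (hsum : ∑ i, e i = 1) (hdec : ∀ i j, i ≠ j → e i * c * e j = 0) (j : ι) :
    Commute (e j) c := by
  have hleft : e j * c = e j * c * e j :=
    calc e j * c = ∑ i, e j * c * e i := by rw [← Finset.mul_sum, hsum, mul_one]
      _ = e j * c * e j :=
        Finset.sum_eq_single_of_mem j (mem_univ j) fun i _ hij => hdec j i hij.symm
  have hright : c * e j = e j * c * e j :=
    calc c * e j = ∑ i, e i * c * e j := by rw [← Finset.sum_mul, ← Finset.sum_mul, hsum, one_mul]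
      _ = e j * c * e j :=
        Finset.sum_eq_single_of_mem j (mem_univ j) fun i _ hij => hdec i j hij
  exact hleft.trans hright.symm

section ExplainedVariance

variable {p : ℕ} {C Q : Mat p}

theorem dotProduct_mulVec_eq_of_mulVec_eq (hQ : Q.IsSymm) (hQC : Commute Q C) (γ : Vec p)
    {β : Vec p} (hβ : Q *ᵥ β = β) : γ ⬝ᵥ C *ᵥ β = (Q *ᵥ γ) ⬝ᵥ C *ᵥ β := by
  conv_lhs => rw [← hβ, mulVec_mulVec, ← hQC.eq, ← mulVec_mulVec, dotProduct_mulVec,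
    ← mulVec_transpose, hQ.eq]

theorem dotProduct_mulVec_comm (hC : C.IsSymm) (x y : Vec p) : x ⬝ᵥ C *ᵥ y = y ⬝ᵥ C *ᵥ x := by
  rw [dotProduct_mulVec, ← mulVec_transpose, hC.eq, dotProduct_comm]

theorem dVar_mulVec_sub_dVar (hC : C.IsSymm) (hQ : Q.IsSymm) (hQQ : IsIdempotentElem Q)
    (hQC : Commute Q C) (γ : Vec p) {β : Vec p} (hβ : Q *ᵥ β = β) :
    dVar C γ (Q *ᵥ γ) - dVar C γ β = (β - Q *ᵥ γ) ⬝ᵥ C *ᵥ (β - Q *ᵥ γ) := by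
  set g := Q *ᵥ γ
  have hg : Q *ᵥ g = g := by rw [mulVec_mulVec, hQQ.eq]
  have hγβ := dotProduct_mulVec_eq_of_mulVec_eq hQ hQC γ hβ
  have hγg := dotProduct_mulVec_eq_of_mulVec_eq hQ hQC γ hg
  have hgβ := dotProduct_mulVec_comm hC g β
  simp only [dVar, hγβ, hγg, mulVec_sub, dotProduct_sub, sub_dotProduct]
  linarith

theorem isUMaxOn_dVar_mulVec (hC : C.PosDef) (hQ : Q.IsSymm) (hQQ : IsIdempotentElem Q)
    (hQC : Commute Q C) (γ : Vec p) : IsUMaxOn (dVar C γ) Q (Q *ᵥ γ) := by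
  refine ⟨by rw [mulVec_mulVec, hQQ.eq], fun β hβ hne => ?_⟩
  have hgap := dVar_mulVec_sub_dVar (isHermitian_iff_isSymm.mp hC.isHermitian) hQ hQQ hQC γ hβ
  have hpos : 0 < (β - Q *ᵥ γ) ⬝ᵥ C *ᵥ (β - Q *ᵥ γ) := by
    simpa using hC.dotProduct_mulVec_pos (sub_ne_zero.mpr hne)
  linarith

end ExplainedVariance

namespace OrthPartition

variable {p q : ℕ} {P : Fin q → Mat p}

theorem completeOrthogonalIdempotents (hP : OrthPartition p q P) :
    CompleteOrthogonalIdempotents P :=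
  ⟨⟨hP.idem, fun i j hij => hP.orth i j hij⟩, hP.sum_one⟩

theorem isUMaxOn_dVar_sum (hP : OrthPartition p q P) {C : Mat p} (hC : C.PosDef)
    (hdec : ∀ i j, i ≠ j → P i * C * P j = 0) (s : Finset (Fin q)) (γ : Vec p) :
    IsUMaxOn (dVar C γ) (∑ j ∈ s, P j) ((∑ j ∈ s, P j) *ᵥ γ) :=
  isUMaxOn_dVar_mulVec hC (by simp [IsSymm, transpose_sum, hP.symm])
    hP.completeOrthogonalIdempotents.isIdempotentElem_sum
    (Commute.sum_left _ _ _ fun j _ =>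
      commute_of_sum_eq_one_of_mul_mul_eq_zero hP.sum_one hdec j) γ

variable {n : ℕ} {Cov : Fin n → Mat p} {γ : Fin n → Vec p}

theorem isUMaxOn_dVar_invProj (hP : OrthPartition p q P) (hCov : ∀ t, (Cov t).PosDef)
    (hdec : ∀ (t : Fin n) (i j : Fin q), i ≠ j → P i * Cov t * P j = 0) (t : Fin n) :
    IsUMaxOn (dVar (Cov t) (γ t)) (invProj Cov γ P) (invProj Cov γ P *ᵥ γ t) :=
  hP.isUMaxOn_dVar_sum (hCov t) (hdec t) _ (γ t)

theorem invProj_mulVec_eq (hP : OrthPartition p q P) (hCov : ∀ t, (Cov t).PosDef)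
    (hdec : ∀ (t : Fin n) (i j : Fin q), i ≠ j → P i * Cov t * P j = 0) (t t' : Fin n) :
    invProj Cov γ P *ᵥ γ t = invProj Cov γ P *ᵥ γ t' := by
  classical
  simp only [invProj, sum_mulVec]
  refine Finset.sum_congr rfl fun j hj => ?_
  obtain ⟨β₀, hβ₀⟩ := (mem_filter.1 hj).2
  have hmax (u : Fin n) : IsUMaxOn (dVar (Cov u) (γ u)) (P j) (P j *ᵥ γ u) := by
    simpa using hP.isUMaxOn_dVar_sum (hCov u) (hdec u) {j} (γ u)
  exact ((hmax t).unique (hβ₀ t)).trans ((hmax t').unique (hβ₀ t')).symm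

end OrthPartition

theorem stmt5_general {p n q : ℕ} (hn : 1 ≤ n)
    (Cov : Fin n → Mat p) (hCov : ∀ t, (Cov t).PosDef)
    (γ : Fin n → Vec p)
    (P : Fin q → Mat p) (hP : OrthPartition p q P)
    (hdec : ∀ (t : Fin n) (i j : Fin q), i ≠ j → P i * Cov t * P j = 0)
    (βinv : Vec p)
    (hβ : IsUMaxOn (fun β => (n : ℝ)⁻¹ * ∑ t, dVar (Cov t) (γ t) β)
      (invProj Cov γ P) βinv) :
    (∀ t : Fin n, βinv = (invProj Cov γ P) *ᵥ γ t) ∧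
    βinv = (invProj Cov γ P) *ᵥ ((n : ℝ)⁻¹ • ∑ t, γ t) := by
  have : Nonempty (Fin n) := ⟨⟨0, hn⟩⟩
  set t₀ : Fin n := ⟨0, hn⟩
  set Q := invProj Cov γ P
  have hmax (t : Fin n) : IsUMaxOn (dVar (Cov t) (γ t)) Q (Q *ᵥ γ t₀) := by
    rw [hP.invProj_mulVec_eq hCov hdec t₀ t]
    exact hP.isUMaxOn_dVar_invProj hCov hdec t
  have hβt₀ : βinv = Q *ᵥ γ t₀ :=
    hβ.unique (IsUMaxOn.const_mul_sum (inv_pos.mpr (Nat.cast_pos.mpr hn)) hmax)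
  have hβt (t : Fin n) : βinv = Q *ᵥ γ t := hβt₀.trans (hP.invProj_mulVec_eq hCov hdec t₀ t)
  refine ⟨hβt, ?_⟩
  rw [mulVec_smul, mulVec_sum, ← Finset.sum_congr rfl fun t _ => hβt t, sum_const, card_univ,
    Fintype.card_fin, ← Nat.cast_smul_eq_nsmul ℝ, inv_smul_smul₀ (Nat.cast_pos.mpr hn).ne']

/-- Proposition 2 (i) of the paper: the unique maximizer `β^inv` of
the averaged explained variance over `𝒮^inv` satisfies `β^inv = Π_{𝒮^inv} γ_t` for all
`t`, and in particular `β^inv = Π_{𝒮^inv} γ̄`. -/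
theorem stmt5 {p n q : ℕ} (hp : 1 ≤ p) (hn : 1 ≤ n)
    (Cov : Fin n → Mat p) (hCov : ∀ t, (Cov t).PosDef)
    (γ : Fin n → Vec p)
    (P : Fin q → Mat p) (hP : OrthPartition p q P)
    (hdec : ∀ (t : Fin n) (i j : Fin q), i ≠ j → P i * Cov t * P j = 0)
    (βinv : Vec p)
    (hβ : IsUMaxOn (fun β => (n : ℝ)⁻¹ * ∑ t, dVar (Cov t) (γ t) β)
      (invProj Cov γ P) βinv) :
    (∀ t : Fin n, βinv = (invProj Cov γ P) *ᵥ γ t) ∧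
    βinv = (invProj Cov γ P) *ᵥ ((n : ℝ)⁻¹ • ∑ t, γ t) :=
  stmt5_general hn Cov hCov γ P hP hdec βinv hβ
end
end

section
/- Let {𝒮_j}_{j=1}^q be an orthogonal (Σ_t)_{t∈T}-decorrelating partition, let 𝒮^inv be the direct sum of those 𝒮_j that are opt-invariant on T, and let β^inv be the unique maximizer over 𝒮^inv of β ↦ (1/n)∑_{t∈T} ΔVar_t(β). Then β^inv is time-invariant over T: for every t ∈ T, (γ_t − β^inv)ᵀ Σ_t β^inv = 0 (equivalently, Cov(Y_t − X_tᵀβ^inv, X_tᵀβ^inv) = 0). -/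
open Matrix Finset MeasureTheory

noncomputable section

/-- A vector `β` is time-invariant over `{1,…,n}`: `(γ_t − β)ᵀ Σ_t β = 0` for all `t`
(equivalently `Cov(Y_t − X_tᵀβ, X_tᵀβ) = 0`). -/
def TimeInv {p n : ℕ} (Cov : Fin n → Mat p) (γ : Fin n → Vec p) (β : Vec p) : Prop :=
  ∀ t : Fin n, (γ t - β) ⬝ᵥ ((Cov t) *ᵥ β) = 0

/-!
For each opt-invariant block `𝒮_j` let `b_j` be the common maximizer of the `ΔVar_t` over
`𝒮_j`. Since `ΔVar_t` is a strictly concave quadratic, `b_j` is characterised by the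
first-order condition `(γ_t − b_j)ᵀ Σ_t v = 0` for `v ∈ 𝒮_j`. Decorrelation kills the cross
terms `b_iᵀ Σ_t v` with `v ∈ 𝒮_j`, `i ≠ j`, so `β* = ∑ b_j` satisfies the first-order
condition of every `ΔVar_t` on all of `𝒮^inv`. Hence `β*` maximizes each `ΔVar_t`, thus also
their average, over `𝒮^inv`, so `β^inv = β*`; and taking `v = β*` in the first-order
condition is exactly time invariance.
-/

namespace IsUMaxOn

variable {p : ℕ} {f : Vec p → ℝ} {P : Mat p}

theorem unique_s6 {β₁ β₂ : Vec p} (h₁ : IsUMaxOn f P β₁) (h₂ : IsUMaxOn f P β₂) : β₁ = β₂ := by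
  by_contra hne
  exact (h₁.2 β₂ h₂.1 (Ne.symm hne)).asymm (h₂.2 β₁ h₁.1 hne)

theorem le {β₀ : Vec p} (h : IsUMaxOn f P β₀) {β : Vec p} (hβ : P *ᵥ β = β) : f β ≤ f β₀ := by
  rcases eq_or_ne β β₀ with rfl | hne
  · exact le_rfl
  · exact (h.2 β hβ hne).le

theorem const_mul_sum_s6 {ι : Type*} [Fintype ι] [Nonempty ι] {f : ι → Vec p → ℝ} {c : ℝ}
    (hc : 0 < c) {β₀ : Vec p} (h : ∀ i, IsUMaxOn (f i) P β₀) :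
    IsUMaxOn (fun β => c * ∑ i, f i β) P β₀ := by
  obtain ⟨i₀⟩ := ‹Nonempty ι›
  refine ⟨(h i₀).1, fun β hβ hne => mul_lt_mul_of_pos_left ?_ hc⟩
  exact Finset.sum_lt_sum_of_nonempty univ_nonempty fun i _ => (h i).2 β hβ hne

end IsUMaxOn

theorem eq_zero_of_forall_two_mul_le_sq_mul {a b : ℝ} (h : ∀ s : ℝ, 2 * s * a ≤ s ^ 2 * b) :
    a = 0 := by
  have hd : 0 < |b| + 1 := by positivity
  obtain ⟨s, rfl⟩ : ∃ s, a = s * (|b| + 1) := ⟨a / (|b| + 1), (div_mul_cancel₀ a hd.ne').symm⟩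
  -- at this `s` the hypothesis reads `s² (2 (|b| + 1) - b) ≤ 0`
  have hs : s = 0 := by nlinarith [h s, le_abs_self b, sq_nonneg s]
  rw [hs, zero_mul]

section ExplainedVariance

variable {p : ℕ} {C : Mat p} {γ : Vec p}

theorem dVar_add (hC : C.IsSymm) (β w : Vec p) :
    dVar C γ (β + w) = dVar C γ β + 2 * ((γ - β) ⬝ᵥ (C *ᵥ w)) - w ⬝ᵥ (C *ᵥ w) := by
  have hsymm : w ⬝ᵥ (C *ᵥ β) = β ⬝ᵥ (C *ᵥ w) := by
    rw [← dotProduct_transpose_mulVec, hC.eq]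
  simp only [dVar, mulVec_add, dotProduct_add, add_dotProduct, sub_dotProduct, hsymm]
  ring

theorem IsUMaxOn.sub_dotProduct_mulVec_eq_zero (hC : C.IsSymm) {P : Mat p} {β₀ : Vec p}
    (hmax : IsUMaxOn (dVar C γ) P β₀) {v : Vec p} (hv : P *ᵥ v = v) :
    (γ - β₀) ⬝ᵥ (C *ᵥ v) = 0 := by
  set a := (γ - β₀) ⬝ᵥ (C *ᵥ v)
  set b := v ⬝ᵥ (C *ᵥ v)
  have hquad : ∀ s : ℝ, 2 * s * a ≤ s ^ 2 * b := by
    intro s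
    have hmem : P *ᵥ (β₀ + s • v) = β₀ + s • v := by
      rw [mulVec_add, mulVec_smul, hmax.1, hv]
    have h := hmax.le hmem
    rw [dVar_add hC] at h
    simp only [mulVec_smul, dotProduct_smul, smul_dotProduct, smul_eq_mul] at h
    nlinarith
  exact eq_zero_of_forall_two_mul_le_sq_mul hquad

theorem isUMaxOn_dVar_of_sub_dotProduct_mulVec_eq_zero (hC : C.PosDef) {P : Mat p}
    {β₀ : Vec p} (hβ₀ : P *ᵥ β₀ = β₀) (hcrit : ∀ v, P *ᵥ v = v → (γ - β₀) ⬝ᵥ (C *ᵥ v) = 0) :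
    IsUMaxOn (dVar C γ) P β₀ := by
  refine ⟨hβ₀, fun β hβ hne => ?_⟩
  have hw : P *ᵥ (β - β₀) = β - β₀ := by rw [mulVec_sub, hβ, hβ₀]
  have hpos := hC.dotProduct_mulVec_pos (sub_ne_zero.2 hne)
  have h := dVar_add (γ := γ) (isHermitian_iff_isSymm.1 hC.isHermitian) β₀ (β - β₀)
  rw [add_sub_cancel, hcrit _ hw] at h
  simp only [star_trivial] at hpos
  linarith

end ExplainedVariance

section Decorrelation

variable {p : ℕ} {C : Mat p}

theorem dotProduct_mulVec_eq_zero_of_decorrelated {P Q : Mat p} (hP : Pᵀ = P)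
    (hdec : P * C * Q = 0) {x y : Vec p} (hx : P *ᵥ x = x) (hy : Q *ᵥ y = y) :
    x ⬝ᵥ (C *ᵥ y) = 0 := by
  rw [← hx, ← hy, dotProduct_comm, ← dotProduct_transpose_mulVec, hP, mulVec_mulVec,
    mulVec_mulVec, hdec, zero_mulVec, dotProduct_zero]

theorem sum_mulVec_sum_of_orthogonal {ι : Type*} (s : Finset ι) {P : ι → Mat p}
    (horth : ∀ i j, i ≠ j → P i * P j = 0) {b : ι → Vec p}
    (hb : ∀ j ∈ s, P j *ᵥ b j = b j) :
    (∑ j ∈ s, P j) *ᵥ ∑ j ∈ s, b j = ∑ j ∈ s, b j := by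
  rw [sum_mulVec]
  refine sum_congr rfl fun k hk => ?_
  rw [mulVec_sum, sum_eq_single_of_mem k hk fun j hj hjk => ?_, hb k hk]
  rw [← hb j hj, mulVec_mulVec, horth k j (Ne.symm hjk), zero_mulVec]

theorem sub_sum_dotProduct_mulVec_eq_zero_of_decorrelated {ι : Type*} (s : Finset ι)
    {P : ι → Mat p} (hsymm : ∀ j, (P j)ᵀ = P j) (hidem : ∀ j, P j * P j = P j)
    (hdec : ∀ i j, i ≠ j → P i * C * P j = 0) {γ : Vec p} {b : ι → Vec p}
    (hb : ∀ j ∈ s, P j *ᵥ b j = b j)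
    (hcrit : ∀ j ∈ s, ∀ v, P j *ᵥ v = v → (γ - b j) ⬝ᵥ (C *ᵥ v) = 0)
    {v : Vec p} (hv : (∑ j ∈ s, P j) *ᵥ v = v) :
    (γ - ∑ j ∈ s, b j) ⬝ᵥ (C *ᵥ v) = 0 := by
  rw [← hv, sum_mulVec, mulVec_sum, dotProduct_sum]
  refine sum_eq_zero fun k hk => ?_
  have hPk : P k *ᵥ (P k *ᵥ v) = P k *ᵥ v := by rw [mulVec_mulVec, hidem]
  have hcross : (∑ j ∈ s, b j) ⬝ᵥ (C *ᵥ (P k *ᵥ v)) = b k ⬝ᵥ (C *ᵥ (P k *ᵥ v)) := by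
    rw [sum_dotProduct]
    exact sum_eq_single_of_mem k hk fun j hj hjk =>
      dotProduct_mulVec_eq_zero_of_decorrelated (hsymm j) (hdec j k hjk) (hb j hj) hPk
  rw [sub_dotProduct, hcross, ← sub_dotProduct]
  exact hcrit k hk _ hPk

end Decorrelation

theorem stmt6_general {p n q : ℕ}
    (Cov : Fin n → Mat p) (hCov : ∀ t, (Cov t).PosDef)
    (γ : Fin n → Vec p)
    (P : Fin q → Mat p) (hP : OrthPartition p q P)
    (hdec : ∀ (t : Fin n) (i j : Fin q), i ≠ j → P i * Cov t * P j = 0)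
    (βinv : Vec p)
    (hβ : IsUMaxOn (fun β => (n : ℝ)⁻¹ * ∑ t, dVar (Cov t) (γ t) β)
      (invProj Cov γ P) βinv) :
    TimeInv Cov γ βinv := by
  classical
  intro t
  have : Nonempty (Fin n) := ⟨t⟩
  set F := univ.filter fun j => OptInv Cov γ (P j)
  have hopt : ∀ j ∈ F, OptInv Cov γ (P j) := fun j hj => (mem_filter.1 hj).2
  choose! b hb using hopt
  have hbmem : ∀ j ∈ F, P j *ᵥ b j = b j := fun j hj => (hb j hj t).1
  have hcrit : ∀ s v, invProj Cov γ P *ᵥ v = v → (γ s - ∑ j ∈ F, b j) ⬝ᵥ (Cov s *ᵥ v) = 0 :=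
    fun s _ hv => sub_sum_dotProduct_mulVec_eq_zero_of_decorrelated F hP.symm hP.idem (hdec s)
      hbmem (fun j hj _ => (hb j hj s).sub_dotProduct_mulVec_eq_zero
        (isHermitian_iff_isSymm.1 (hCov s).isHermitian)) hv
  have hmem : invProj Cov γ P *ᵥ ∑ j ∈ F, b j = ∑ j ∈ F, b j :=
    sum_mulVec_sum_of_orthogonal F hP.orth hbmem
  have hmax : IsUMaxOn (fun β => (n : ℝ)⁻¹ * ∑ t, dVar (Cov t) (γ t) β)
      (invProj Cov γ P) (∑ j ∈ F, b j) :=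
    IsUMaxOn.const_mul_sum_s6 (inv_pos.2 (Nat.cast_pos.2 t.pos)) fun s =>
      isUMaxOn_dVar_of_sub_dotProduct_mulVec_eq_zero (hCov s) hmem (hcrit s)
  rw [hβ.unique_s6 hmax]
  exact hcrit t _ hmem

/-- Proposition 2 (ii) of the paper: the unique maximizer `β^inv` of
the averaged explained variance over `𝒮^inv` is time-invariant over `{1,…,n}`. -/
theorem stmt6 {p n q : ℕ} (hp : 1 ≤ p) (hn : 1 ≤ n)
    (Cov : Fin n → Mat p) (hCov : ∀ t, (Cov t).PosDef)
    (γ : Fin n → Vec p)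
    (P : Fin q → Mat p) (hP : OrthPartition p q P)
    (hdec : ∀ (t : Fin n) (i j : Fin q), i ≠ j → P i * Cov t * P j = 0)
    (βinv : Vec p)
    (hβ : IsUMaxOn (fun β => (n : ℝ)⁻¹ * ∑ t, dVar (Cov t) (γ t) β)
      (invProj Cov γ P) βinv) :
    TimeInv Cov γ βinv :=
  stmt6_general Cov hCov γ P hP hdec βinv hβ
end
end

section
/- Suppose 𝒮^inv and 𝒮^res are orthogonal linear subspaces of ℝ^p with 𝒮^inv ⊕ 𝒮^res = ℝ^p such that for all t ∈ ℕ, Π_{𝒮^inv} Σ_t Π_{𝒮^res} = 0, and such that 𝒮^inv is opt-invariant on ℕ with common maximizer β^inv (so Π_{𝒮^inv}γ_t = β^inv for all t). For t ∈ ℕ, β ∈ ℝ^p and γ ∈ ℝ^p write f_t(β, γ) := 2 γᵀΣ_tβ − βᵀΣ_tβ, and define I_t(β) := inf{ f_t(β, γ) : γ ∈ ℝ^p, γ − β^inv ∈ 𝒮^res } ∈ ℝ ∪ {−∞}. Then for every t ∈ ℕ: (a) if β ∉ 𝒮^inv the set { f_t(β, γ) : γ − β^inv ∈ 𝒮^res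 } is unbounded below; (b) if β ∈ 𝒮^inv then f_t(β, γ) = 2 (β^inv)ᵀΣ_tβ − βᵀΣ_tβ for every admissible γ, so I_t(β) equals this value; and (c) β^inv is the unique maximizer of β ↦ I_t(β): I_t(β^inv) = (β^inv)ᵀΣ_tβ^inv and I_t(β) < I_t(β^inv) for every β ≠ β^inv. -/
open Matrix Finset MeasureTheory

noncomputable section

/-- The worst-case explained variance
`I_t(β) = inf { f_t(β,γ) : γ − β^inv ∈ 𝒮^res } ∈ ℝ ∪ {−∞}`, as an `EReal`-valued
infimum, where `f_t(β,γ) = 2 γᵀΣ_tβ − βᵀΣ_tβ`. -/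
noncomputable def Ifun {p : ℕ} (C : Mat p) (Pres : Mat p) (βinv β : Vec p) : EReal :=
  ⨅ g ∈ {g : Vec p | Pres *ᵥ (g - βinv) = g - βinv}, ((dVar C g β : ℝ) : EReal)

/-!
Since `Πinv Σ Πres = 0` and `Σ` is symmetric, `𝒮^inv` and `𝒮^res` are `Σ`-orthogonal. Hence for
`β ∈ 𝒮^inv` the value `f(β, γ)` is the same for every admissible `γ ∈ β^inv + 𝒮^res`, namely
`f(β, β^inv)`, and positive definiteness makes `β^inv` its strict maximizer over `β`. For
`β ∉ 𝒮^inv` the component `r = Πres β` is nonzero with `rᵀ Σ β = rᵀ Σ r > 0`, so moving `γ`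
along `r` drives `f(β, γ) = f(β, β^inv) + 2 (γ - β^inv)ᵀ Σ β` to `-∞`.
-/

namespace Matrix

variable {n : Type*}

theorem PosDef.isSymm {C : Matrix n n ℝ} (hC : C.PosDef) : C.IsSymm :=
  isHermitian_iff_isSymm.mp hC.isHermitian

theorem dotProduct_mulVec_mulVec_eq_zero [Fintype n] {P Q C : Matrix n n ℝ} (hP : Pᵀ = P)
    (hPCQ : P * C * Q = 0) (x y : n → ℝ) : (P *ᵥ x) ⬝ᵥ (C *ᵥ (Q *ᵥ y)) = 0 := by
  rw [dotProduct_comm, ← dotProduct_transpose_mulVec, hP, mulVec_mulVec, mulVec_mulVec,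
    hPCQ, zero_mulVec, dotProduct_zero]

end Matrix

section ExplainedVariance

variable {p : ℕ} {C : Mat p}

theorem dVar_add_left (γ δ β : Vec p) :
    dVar C (γ + δ) β = dVar C γ β + 2 * (δ ⬝ᵥ (C *ᵥ β)) := by
  simp only [dVar, add_dotProduct]
  ring

theorem dVar_self (β : Vec p) : dVar C β β = β ⬝ᵥ (C *ᵥ β) := by
  rw [dVar]
  ring

theorem dVar_lt_dVar_self (hC : C.PosDef) {γ β : Vec p} (hne : β ≠ γ) :
    dVar C γ β < dVar C γ γ := by
  have hpos : 0 < (γ - β) ⬝ᵥ (C *ᵥ (γ - β)) := by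
    simpa using hC.dotProduct_mulVec_pos (sub_ne_zero.mpr hne.symm)
  have hsymm : β ⬝ᵥ (C *ᵥ γ) = γ ⬝ᵥ (C *ᵥ β) := by
    rw [← dotProduct_transpose_mulVec, hC.isSymm.eq]
  simp only [mulVec_sub, dotProduct_sub, sub_dotProduct] at hpos
  rw [dVar, dVar]
  linarith

variable {Pinv Pres : Mat p} {βinv : Vec p}

abbrev admissible (Pres : Mat p) (βinv : Vec p) : Set (Vec p) :=
  {g : Vec p | Pres *ᵥ (g - βinv) = g - βinv}

theorem dVar_eq_of_mem (hC : C.IsSymm) (hsymm : Pinvᵀ = Pinv) (hdec : Pinv * C * Pres = 0)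
    {β g : Vec p} (hβ : Pinv *ᵥ β = β) (hg : g ∈ admissible Pres βinv) :
    dVar C g β = dVar C βinv β := by
  have hcross : (g - βinv) ⬝ᵥ (C *ᵥ β) = 0 := by
    rw [← dotProduct_transpose_mulVec, hC.eq, ← hβ, ← hg.out,
      dotProduct_mulVec_mulVec_eq_zero hsymm hdec]
  rw [← add_sub_cancel βinv g, dVar_add_left, hcross, mul_zero, add_zero]

theorem not_bddBelow_dVar (hC : C.PosDef) (hsymm : Pinvᵀ = Pinv) (hidem : Pres * Pres = Pres)
    (hsum : Pinv + Pres = 1) (hdec : Pinv * C * Pres = 0) {β : Vec p} (hβ : Pinv *ᵥ β ≠ β) :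
    ¬ BddBelow ((fun g => dVar C g β) '' admissible Pres βinv) := by
  set r := Pres *ᵥ β
  have hdecomp : Pinv *ᵥ β + r = β := by rw [← add_mulVec, hsum, one_mulVec]
  have hr : r ≠ 0 := fun h => hβ (by rwa [h, add_zero] at hdecomp)
  -- `r ∈ 𝒮^res` is `C`-orthogonal to `Pinv β ∈ 𝒮^inv`, so `rᵀ C β = rᵀ C r > 0`
  have hrβ : 0 < r ⬝ᵥ (C *ᵥ β) := by
    have hcross : r ⬝ᵥ (C *ᵥ (Pinv *ᵥ β)) = 0 := by
      rw [← dotProduct_transpose_mulVec, hC.isSymm.eq,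
        dotProduct_mulVec_mulVec_eq_zero hsymm hdec]
    rw [← hdecomp, mulVec_add, dotProduct_add, hcross, zero_add]
    simpa using hC.dotProduct_mulVec_pos hr
  rw [not_bddBelow_iff]
  intro m
  set c := (m - 1 - dVar C βinv β) / (2 * (r ⬝ᵥ (C *ᵥ β)))
  refine ⟨dVar C (βinv + c • r) β, ⟨βinv + c • r, ?_, rfl⟩, ?_⟩
  · simp only [admissible, Set.mem_ofPred_eq, add_sub_cancel_left, mulVec_smul, r,
      mulVec_mulVec, hidem]
  · rw [dVar_add_left, smul_dotProduct, smul_eq_mul]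
    have : c * (2 * (r ⬝ᵥ (C *ᵥ β))) = m - 1 - dVar C βinv β :=
      div_mul_cancel₀ _ (by positivity)
    linarith

theorem Ifun_eq_of_mem (hC : C.IsSymm) (hsymm : Pinvᵀ = Pinv) (hdec : Pinv * C * Pres = 0)
    {β : Vec p} (hβ : Pinv *ᵥ β = β) : Ifun C Pres βinv β = dVar C βinv β := by
  have hβinv : βinv ∈ admissible Pres βinv := by simp
  refine le_antisymm (iInf₂_le βinv hβinv) (le_iInf₂ fun g hg => ?_)
  rw [dVar_eq_of_mem hC hsymm hdec hβ hg]

theorem Ifun_eq_bot (hC : C.PosDef) (hsymm : Pinvᵀ = Pinv) (hidem : Pres * Pres = Pres)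
    (hsum : Pinv + Pres = 1) (hdec : Pinv * C * Pres = 0) {β : Vec p} (hβ : Pinv *ᵥ β ≠ β) :
    Ifun C Pres βinv β = ⊥ := by
  refine (EReal.eq_bot_iff_forall_lt _).mpr fun m => ?_
  obtain ⟨_, ⟨g, hg, rfl⟩, hlt⟩ :=
    not_bddBelow_iff.mp (not_bddBelow_dVar (βinv := βinv) hC hsymm hidem hsum hdec hβ) m
  exact (iInf₂_le g hg).trans_lt (EReal.coe_lt_coe_iff.mpr hlt)

end ExplainedVariance

theorem stmt8_general {p : ℕ}
    (Cov : ℕ → Mat p) (hCov : ∀ t, 1 ≤ t → (Cov t).PosDef)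
    (γ0 : ℕ → Vec p)
    (Pinv Pres : Mat p)
    (hsymm₁ : Pinvᵀ = Pinv)
    (hidem₂ : Pres * Pres = Pres)
    (hsum : Pinv + Pres = 1)
    (hdec : ∀ t, 1 ≤ t → Pinv * Cov t * Pres = 0)
    (βinv : Vec p)
    (hopt : ∀ t, 1 ≤ t → IsUMaxOn (dVar (Cov t) (γ0 t)) Pinv βinv) :
    ∀ t, 1 ≤ t →
      -- (a) if β ∉ 𝒮^inv the admissible values of f_t(β, ·) are unbounded below
      (∀ β : Vec p, ¬ (Pinv *ᵥ β = β) →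
        ¬ BddBelow ((fun g => dVar (Cov t) g β) ''
            {g : Vec p | Pres *ᵥ (g - βinv) = g - βinv})) ∧
      -- (b) if β ∈ 𝒮^inv then f_t(β, γ) is constant in admissible γ, and I_t(β)
      -- equals this value
      (∀ β : Vec p, Pinv *ᵥ β = β →
        (∀ g : Vec p, Pres *ᵥ (g - βinv) = g - βinv →
          dVar (Cov t) g β
            = 2 * (βinv ⬝ᵥ ((Cov t) *ᵥ β)) - β ⬝ᵥ ((Cov t) *ᵥ β)) ∧
        Ifun (Cov t) Pres βinv β
          = ((2 * (βinv ⬝ᵥ ((Cov t) *ᵥ β)) - β ⬝ᵥ ((Cov t) *ᵥ β) : ℝ) : EReal)) ∧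
      -- (c) β^inv is the unique maximizer of I_t
      (Ifun (Cov t) Pres βinv βinv = ((βinv ⬝ᵥ ((Cov t) *ᵥ βinv) : ℝ) : EReal) ∧
       ∀ β : Vec p, β ≠ βinv →
         Ifun (Cov t) Pres βinv β < Ifun (Cov t) Pres βinv βinv) := by
  intro t ht
  have hC := hCov t ht
  have hCsymm := hC.isSymm
  have hPCQ := hdec t ht
  have hIinv := Ifun_eq_of_mem (βinv := βinv) hCsymm hsymm₁ hPCQ (hopt t ht).1
  refine ⟨fun β hβ => not_bddBelow_dVar hC hsymm₁ hidem₂ hsum hPCQ hβ,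
    fun β hβ => ⟨fun g hg => dVar_eq_of_mem hCsymm hsymm₁ hPCQ hβ hg,
      Ifun_eq_of_mem hCsymm hsymm₁ hPCQ hβ⟩,
    by rw [hIinv, dVar_self], fun β hne => ?_⟩
  rw [hIinv]
  by_cases hβ : Pinv *ᵥ β = β
  · rw [Ifun_eq_of_mem hCsymm hsymm₁ hPCQ hβ]
    exact EReal.coe_lt_coe_iff.mpr (dVar_lt_dVar_self hC hne)
  · rw [Ifun_eq_bot hC hsymm₁ hidem₂ hsum hPCQ hβ]
    exact EReal.bot_lt_coe _

/-- Theorem 2 of the paper: `β^inv` is worst-case optimal. -/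
theorem stmt8 {p : ℕ} (hp : 1 ≤ p)
    (Cov : ℕ → Mat p) (hCov : ∀ t, 1 ≤ t → (Cov t).PosDef)
    (γ0 : ℕ → Vec p)
    (Pinv Pres : Mat p)
    (hsymm₁ : Pinvᵀ = Pinv) (hidem₁ : Pinv * Pinv = Pinv)
    (hsymm₂ : Presᵀ = Pres) (hidem₂ : Pres * Pres = Pres)
    (horth : Pinv * Pres = 0)
    (hsum : Pinv + Pres = 1)
    (hdec : ∀ t, 1 ≤ t → Pinv * Cov t * Pres = 0)
    (βinv : Vec p)
    (hopt : ∀ t, 1 ≤ t → IsUMaxOn (dVar (Cov t) (γ0 t)) Pinv βinv) :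
    ∀ t, 1 ≤ t →
      -- (a) if β ∉ 𝒮^inv the admissible values of f_t(β, ·) are unbounded below
      (∀ β : Vec p, ¬ (Pinv *ᵥ β = β) →
        ¬ BddBelow ((fun g => dVar (Cov t) g β) ''
            {g : Vec p | Pres *ᵥ (g - βinv) = g - βinv})) ∧
      -- (b) if β ∈ 𝒮^inv then f_t(β, γ) is constant in admissible γ, and I_t(β)
      -- equals this value
      (∀ β : Vec p, Pinv *ᵥ β = β →
        (∀ g : Vec p, Pres *ᵥ (g - βinv) = g - βinv →
          dVar (Cov t) g β
            = 2 * (βinv ⬝ᵥ ((Cov t) *ᵥ β)) - β ⬝ᵥ ((Cov t) *ᵥ β)) ∧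
        Ifun (Cov t) Pres βinv β
          = ((2 * (βinv ⬝ᵥ ((Cov t) *ᵥ β)) - β ⬝ᵥ ((Cov t) *ᵥ β) : ℝ) : EReal)) ∧
      -- (c) β^inv is the unique maximizer of I_t
      (Ifun (Cov t) Pres βinv βinv = ((βinv ⬝ᵥ ((Cov t) *ᵥ βinv) : ℝ) : EReal) ∧
       ∀ β : Vec p, β ≠ βinv →
         Ifun (Cov t) Pres βinv β < Ifun (Cov t) Pres βinv βinv) :=
  stmt8_general Cov hCov γ0 Pinv Pres hsymm₁ hidem₂ hsum hdec βinv hopt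
end
end
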